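/- arXiv:1302.4683 — 2 statements merged into one kernel-verified Lean document; each statement's English description precedes it below -/
import Mathlib

section
/- Let C be a braided monoidal category, A a unital associative algebra in C, and suppose the pair (U, z) with half-braiding z and r : U → A is compatible with the product of A, and similarly (U', z') with r' : U' → A. Then the full center Z(A), if it exists as terminal among compatible pairs, is unique up to unique isomorphism, and carries a unique algebra structure in the Drinfeld center Z(C) such that ζ_A is an algebra morphism, and this algebra structure is commutative. -/
open CategoryTheory MonoidalCategory

variable {C : Type*} [Category C] [MonoidalCategory C]

/-- A pair consisting of an object `(U, z)` of the Drinfeld center together with a morphism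
`r : U ⟶ A` that is compatible with the product of the algebra `A`, i.e.
`m ∘ (id_A ⊗ r) ∘ z_A = m ∘ (r ⊗ id_A)`. -/
structure CenterCompatiblePair (A : Mon C) where
  /-- the underlying object of the Drinfeld center -/
  Z : CategoryTheory.Center C
  /-- the morphism to `A` -/
  r : Z.1 ⟶ A.X
  compat : (Z.2.β A.X).hom ≫ (A.X ◁ r) ≫ (MonObj.mul : A.X ⊗ A.X ⟶ A.X) = (r ▷ A.X) ≫ (MonObj.mul : A.X ⊗ A.X ⟶ A.X)

/-- A compatible pair `(T, ζ)` is a full center of `A` if it is terminal among compatible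
pairs. -/
def IsFullCenter {A : Mon C} (T : CenterCompatiblePair A) : Prop :=
  ∀ P : CenterCompatiblePair A, ∃! κ : P.Z ⟶ T.Z, κ.f ≫ T.r = P.r

/-!
Terminality of `T` makes a morphism into `T.Z` determined by its composite with `T.r`. The unit
`η` and the product `(T.r ⊗ T.r) ≫ μ` are compatible pairs (a product of two morphisms
commuting past `A` commutes past `A`), so they factor uniquely through `T.r`, giving the unit
and multiplication. Each algebra law, and commutativity, then holds because both sides agree
after composing with the multiplicative morphism `T.r`; for commutativity this is naturality
of the half-braiding of `T.Z` combined with the compatibility of `T.r`.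
-/

open scoped MonObj

section MonObj

variable {M X Y : C} [MonObj M] (f : X ⟶ M) (g : Y ⟶ M)

theorem tensorHom_mul_whiskerRight_mul :
    ((f ⊗ₘ g) ≫ μ) ▷ M ≫ μ = (α_ X Y M).hom ≫ X ◁ ((g ▷ M) ≫ μ) ≫ (f ▷ M) ≫ μ := by
  simp only [mon_tauto]

theorem whiskerLeft_tensorHom_mul_mul :
    M ◁ ((f ⊗ₘ g) ≫ μ) ≫ μ = (α_ M X Y).inv ≫ ((M ◁ f) ≫ μ) ▷ Y ≫ (M ◁ g) ≫ μ := by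
  simp only [mon_tauto]

theorem mul_whiskerRight_whiskerLeft_mul :
    ((f ▷ M) ≫ μ) ▷ Y ≫ (M ◁ g) ≫ μ = (α_ X M Y).hom ≫ X ◁ ((M ◁ g) ≫ μ) ≫ (f ▷ M) ≫ μ := by
  simp only [mon_tauto]

theorem tensorHom_mul_commutes_of_commutes {U V : C} (bU : U ⊗ M ⟶ M ⊗ U)
    (bV : V ⊗ M ⟶ M ⊗ V) {r : U ⟶ M} {s : V ⟶ M} (hr : bU ≫ M ◁ r ≫ μ = r ▷ M ≫ μ)
    (hs : bV ≫ M ◁ s ≫ μ = s ▷ M ≫ μ) :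
    ((α_ U V M).hom ≫ U ◁ bV ≫ (α_ U M V).inv ≫ bU ▷ V ≫ (α_ M U V).hom) ≫
      M ◁ ((r ⊗ₘ s) ≫ μ) ≫ μ = ((r ⊗ₘ s) ≫ μ) ▷ M ≫ μ := by
  rw [whiskerLeft_tensorHom_mul_mul, tensorHom_mul_whiskerRight_mul]
  simp only [Category.assoc]
  rw [Iso.hom_inv_id_assoc, ← comp_whiskerRight_assoc, hr, mul_whiskerRight_whiskerLeft_mul,
    Iso.inv_hom_id_assoc, ← whiskerLeft_comp_assoc, hs]

end MonObj

/- Stated in `C` and applied to morphisms of `Center C` by defeq: rewriting in `Center C` itself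
fails, as `(X ⊗ Y).1` and `X.1 ⊗ Y.1` agree only after unfolding the definition `Center`. -/
section MultiplicativeMorphism

variable {M U : C} [MonObj M] {r : U ⟶ M} {m : U ⊗ U ⟶ U} (hm : m ≫ r = (r ⊗ₘ r) ≫ μ)
include hm

theorem whiskerRight_one_mul_comp {u : 𝟙_ C ⟶ U} (hu : u ≫ r = η) :
    (u ▷ U ≫ m) ≫ r = (λ_ U).hom ≫ r := by
  rw [Category.assoc, hm, ← tensorHom_id, tensorHom_comp_tensorHom_assoc, hu, Category.id_comp]
  simp [MonoidalCategory.tensorHom_def']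

theorem whiskerLeft_one_mul_comp {u : 𝟙_ C ⟶ U} (hu : u ≫ r = η) :
    (U ◁ u ≫ m) ≫ r = (ρ_ U).hom ≫ r := by
  rw [Category.assoc, hm, ← id_tensorHom, tensorHom_comp_tensorHom_assoc, hu, Category.id_comp]
  simp [MonoidalCategory.tensorHom_def]

theorem mul_whiskerRight_mul_comp :
    (m ▷ U ≫ m) ≫ r = ((α_ U U U).hom ≫ U ◁ m ≫ m) ≫ r := by
  simp only [Category.assoc, hm]
  rw [← tensorHom_id, tensorHom_comp_tensorHom_assoc, hm, ← id_tensorHom,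
    tensorHom_comp_tensorHom_assoc, hm]
  simp only [mon_tauto]

theorem halfBraiding_mul_comp (b : HalfBraiding U)
    (hr : (b.β M).hom ≫ M ◁ r ≫ μ = r ▷ M ≫ μ) : ((b.β U).hom ≫ m) ≫ r = m ≫ r := by
  rw [Category.assoc, hm, MonoidalCategory.tensorHom_def_assoc, ← b.naturality_assoc, hr,
    ← MonoidalCategory.tensorHom_def'_assoc, MonoidalCategory.tensorHom_def_assoc]

end MultiplicativeMorphism

namespace CenterCompatiblePair

noncomputable def unit (A : Mon C) : CenterCompatiblePair A where
  Z := 𝟙_ (Center C)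
  r := η[A.X]
  compat := by
    -- restated in `C` for the same reason as the lemmas above
    change ((λ_ A.X).hom ≫ (ρ_ A.X).inv) ≫ A.X ◁ η[A.X] ≫ μ[A.X] = η[A.X] ▷ A.X ≫ μ[A.X]
    simp

variable {A : Mon C}

noncomputable def mul (P Q : CenterCompatiblePair A) : CenterCompatiblePair A where
  Z := P.Z ⊗ Q.Z
  r := (P.r ⊗ₘ Q.r) ≫ μ
  compat := tensorHom_mul_commutes_of_commutes _ _ P.compat Q.compat

def comap (P : CenterCompatiblePair A) {Z : Center C} (f : Z ⟶ P.Z) : CenterCompatiblePair A where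
  Z := Z
  r := f.f ≫ P.r
  compat := by
    rw [MonoidalCategory.whiskerLeft_comp_assoc, ← f.comm_assoc, P.compat, comp_whiskerRight_assoc]

end CenterCompatiblePair

namespace IsFullCenter

variable {A : Mon C} {T : CenterCompatiblePair A}

theorem hom_ext (hT : IsFullCenter T) {Z : Center C} {f g : Z ⟶ T.Z}
    (h : f.f ≫ T.r = g.f ≫ T.r) : f = g :=
  (hT (T.comap f)).unique rfl h.symm

theorem existsUnique_iso (hT : IsFullCenter T) {T' : CenterCompatiblePair A}
    (hT' : IsFullCenter T') : ∃! e : T.Z ≅ T'.Z, e.hom.f ≫ T'.r = T.r := by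
  obtain ⟨κ, hκ, hκ_unique⟩ := hT' T
  obtain ⟨κ', hκ', -⟩ := hT T'
  refine ⟨⟨κ, κ', hT.hom_ext ?_, hT'.hom_ext ?_⟩, hκ, fun e he => Iso.ext (hκ_unique e.hom he)⟩ <;>
    simp [hκ, hκ']

end IsFullCenter

/-- **Uniqueness and commutative algebra structure of the full center**: if the full center
`Z(A)` of an algebra `A` in a monoidal category exists (as a terminal object among pairs
compatible with the product of `A`), then it is unique up to unique isomorphism, and it
carries a unique algebra structure in the Drinfeld center such that `ζ_A` is an algebra
morphism; this algebra structure is commutative. -/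
theorem fullCenter_unique_and_commutative_algebra
    {A : Mon C} (T : CenterCompatiblePair A) (hT : IsFullCenter T) :
    (∀ T' : CenterCompatiblePair A, IsFullCenter T' →
      ∃! e : T.Z ≅ T'.Z, e.hom.f ≫ T'.r = T.r) ∧
    (∃! p : (T.Z ⊗ T.Z ⟶ T.Z) × (𝟙_ (CategoryTheory.Center C) ⟶ T.Z),
      -- unit axioms
      ((p.2 ▷ T.Z) ≫ p.1 = (λ_ T.Z).hom) ∧
      ((T.Z ◁ p.2) ≫ p.1 = (ρ_ T.Z).hom) ∧
      -- associativity
      ((p.1 ▷ T.Z) ≫ p.1 = (α_ T.Z T.Z T.Z).hom ≫ (T.Z ◁ p.1) ≫ p.1) ∧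
      -- commutativity
      ((β_ T.Z T.Z).hom ≫ p.1 = p.1) ∧
      -- `ζ_A = T.r` is a morphism of algebras
      (p.1.f ≫ T.r = (T.r ⊗ₘ T.r) ≫ (MonObj.mul : A.X ⊗ A.X ⟶ A.X)) ∧
      (p.2.f ≫ T.r = (MonObj.one : 𝟙_ C ⟶ A.X))) := by
  refine ⟨fun T' hT' => hT.existsUnique_iso hT', ?_⟩
  obtain ⟨m, hm, -⟩ : ∃! m : T.Z ⊗ T.Z ⟶ T.Z, m.f ≫ T.r = (T.r ⊗ₘ T.r) ≫ μ := hT (T.mul T)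
  obtain ⟨u, hu, -⟩ : ∃! u : 𝟙_ (Center C) ⟶ T.Z, u.f ≫ T.r = η := hT (.unit A)
  refine ⟨(m, u), ⟨hT.hom_ext (whiskerRight_one_mul_comp hm hu),
    hT.hom_ext (whiskerLeft_one_mul_comp hm hu), hT.hom_ext (mul_whiskerRight_mul_comp hm),
    hT.hom_ext (halfBraiding_mul_comp hm T.Z.2 T.compat), hm, hu⟩, ?_⟩
  rintro ⟨m', u'⟩ ⟨-, -, -, -, hm', hu'⟩
  exact Prod.ext (hT.hom_ext (hm'.trans hm.symm)) (hT.hom_ext (hu'.trans hu.symm))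
end

section
/- Let H be a finite-dimensional Hopf algebra over a field k with right cointegral λ and left integral Λ normalized so that λ(Λ) = 1. Then the Frobenius map Φ : H → H*, Φ(h) = λ(S(h) · −) (i.e., Φ = ((λ∘m) ⊗ id_{H*}) ∘ (S ⊗ b_H)), is a linear isomorphism; in particular H is a Frobenius algebra with Frobenius form λ. -/
open scoped TensorProduct

/-- A left integral of a Hopf algebra `H`. -/
def IsLeftIntegral (k : Type*) {H : Type*} [CommRing k] [Ring H] [HopfAlgebra k H]
    (Λ : H) : Prop :=
  ∀ h : H, h * Λ = Coalgebra.counit (R := k) h • Λ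

/-- A right cointegral of a Hopf algebra `H`. -/
def IsRightCointegral (k : Type*) {H : Type*} [CommRing k] [Ring H] [HopfAlgebra k H]
    (lam : Module.Dual k H) : Prop :=
  ∀ h : H,
    TensorProduct.lid k H ((TensorProduct.map lam LinearMap.id) (Coalgebra.comul (R := k) h)) =
      lam h • (1 : H)

/-!
For a left integral `Λ`, the identity `(S h ⊗ 1) Δ(Λ) = (1 ⊗ h) Δ(Λ)` follows from
`h₁ Λ = ε(h₁) Λ` and `S(h₁) h₂ ⊗ h₃ = 1 ⊗ h`. Applying `lam ⊗ id` and the cointegral property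
`(lam ⊗ id) Δ = lam(-) 1` gives `∑ lam (S(h) Λ₁) Λ₂ = lam(Λ) h = h`, so `f ↦ (f ⊗ id) Δ(Λ)` is a
left inverse of the Frobenius map. Since `H` and `H*` have the same finite dimension, the
Frobenius map is bijective.
-/

open HopfAlgebra TensorProduct
open Coalgebra (comul counit)
open scoped Coalgebra

lemma Coalgebra.sum_counit_smul_right {k C : Type*} [CommSemiring k] [AddCommMonoid C]
    [Module k C] [Coalgebra k C] {c : C} {ι : Type*} (r : Coalgebra.Repr k c ι) :
    ∑ i ∈ r.index, counit (R := k) (r.right i) • r.left i = c := by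
  simpa only [map_sum, _root_.TensorProduct.rid_tmul, one_smul] using
    congr(_root_.TensorProduct.rid k C $(Coalgebra.sum_tmul_counit_eq r))

namespace HopfAlgebra

variable {k H : Type*} [CommRing k] [Ring H] [HopfAlgebra k H]

lemma sum_antipode_tmul_one_mul_comul {h : H} {ι : Type*} (r : Coalgebra.Repr k h ι) :
    ∑ i ∈ r.index, (antipode k (r.left i) ⊗ₜ[k] (1 : H)) * comul (r.right i) =
      (1 : H) ⊗ₜ[k] h := by
  -- coassociativity, pushed through `x ⊗ (y ⊗ z) ↦ S(x) y ⊗ z`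
  have hcoassoc := congr(map (LinearMap.mul' k H ∘ₗ (antipode k).rTensor H) LinearMap.id
    ((TensorProduct.assoc k H H H).symm
      $(Coalgebra.sum_tmul_tmul_eq r (fun i ↦ ℛ k (r.left i)) (fun i ↦ ℛ k (r.right i)))))
  simp only [map_sum, TensorProduct.assoc_symm_tmul, TensorProduct.map_tmul, LinearMap.comp_apply,
    LinearMap.rTensor_tmul, LinearMap.mul'_apply, LinearMap.id_apply, ← sum_tmul,
    sum_antipode_mul_eq_smul] at hcoassoc
  conv_rhs => rw [← Coalgebra.sum_counit_smul r]
  simp only [tmul_sum, tmul_smul, ← smul_tmul', ← hcoassoc, ← (ℛ k (r.right _)).eq, Finset.mul_sum,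
    Algebra.TensorProduct.tmul_mul_tmul, one_mul]

lemma IsLeftIntegral.antipode_tmul_one_mul_comul {Λ : H} (hΛ : IsLeftIntegral k Λ) (h : H) :
    (antipode k h ⊗ₜ[k] (1 : H)) * comul Λ = ((1 : H) ⊗ₜ[k] h) * comul Λ := by
  conv_lhs => rw [← Coalgebra.sum_counit_smul_right (ℛ k h)]
  rw [← sum_antipode_tmul_one_mul_comul (ℛ k h), Finset.sum_mul]
  simp only [mul_assoc, ← Bialgebra.comul_mul, hΛ _, map_smul, map_sum, sum_tmul, Finset.sum_mul,
    mul_smul_comm, ← smul_tmul', smul_mul_assoc]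

noncomputable def frobeniusMap (lam : Module.Dual k H) : H →ₗ[k] Module.Dual k H :=
  (LinearMap.mul k H).compr₂ lam ∘ₗ antipode k

@[simp]
lemma frobeniusMap_apply (lam : Module.Dual k H) (h x : H) :
    frobeniusMap lam h x = lam (antipode k h * x) :=
  rfl

lemma lid_map_frobeniusMap_comul {Λ : H} {lam : Module.Dual k H} (hΛ : IsLeftIntegral k Λ)
    (hlam : IsRightCointegral k lam) (h : H) :
    TensorProduct.lid k H (map (frobeniusMap lam h) LinearMap.id (comul Λ)) = lam Λ • h := by
  have key := congr(TensorProduct.lid k H (map lam LinearMap.id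
    $(hΛ.antipode_tmul_one_mul_comul h)))
  have hcoint := hlam Λ
  rw [← (ℛ k Λ).eq] at key hcoint ⊢
  simp only [Finset.mul_sum, Algebra.TensorProduct.tmul_mul_tmul, one_mul, map_sum,
    TensorProduct.map_tmul, LinearMap.id_apply, TensorProduct.lid_tmul, frobeniusMap_apply]
    at key hcoint ⊢
  rw [key]
  simp_rw [← mul_smul_comm, ← Finset.mul_sum, hcoint, mul_smul_comm, mul_one]

lemma frobeniusMap_injective {Λ : H} {lam : Module.Dual k H} (hΛ : IsLeftIntegral k Λ)
    (hlam : IsRightCointegral k lam) (hnorm : lam Λ = 1) :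
    Function.Injective (frobeniusMap lam) :=
  Function.LeftInverse.injective (g := fun f ↦ TensorProduct.lid k H (map f .id (comul Λ)))
    fun h ↦ (lid_map_frobeniusMap_comul hΛ hlam h).trans (by rw [hnorm, one_smul])

end HopfAlgebra

theorem frobeniusMap_bijective_general
    (k H : Type*) [Field k] [Ring H] [HopfAlgebra k H] [FiniteDimensional k H]
    (Λ : H) (lam : Module.Dual k H)
    (hΛint : IsLeftIntegral k Λ) (hlamcoint : IsRightCointegral k lam)
    (hnorm : lam Λ = 1) :
    ∃ Φ : H ≃ₗ[k] Module.Dual k H,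
      ∀ h x : H, Φ h x = lam (HopfAlgebra.antipode (R := k) h * x) := by
  have hinj := frobeniusMap_injective hΛint hlamcoint hnorm
  have hsurj : Function.Surjective (frobeniusMap lam) :=
    (LinearMap.injective_iff_surjective_of_finrank_eq_finrank
      (Subspace.dual_finrank_eq (K := k) (V := H)).symm).1 hinj
  exact ⟨.ofBijective _ ⟨hinj, hsurj⟩, frobeniusMap_apply lam⟩

/-- **The Frobenius map of a finite-dimensional Hopf algebra is an isomorphism**: if `Λ` is a
left integral and `lam` a right cointegral with `lam(Λ) = 1`, then the Frobenius map
`Φ : H → H*`, `Φ(h) = lam(S(h) · −)`, is a `k`-linear isomorphism; in particular `H` is a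
Frobenius algebra with Frobenius form `lam`. -/
theorem frobeniusMap_bijective
    (k H : Type*) [Field k] [Ring H] [HopfAlgebra k H] [FiniteDimensional k H]
    (Λ : H) (lam : Module.Dual k H)
    (hΛ : Λ ≠ 0) (hlam : lam ≠ 0)
    (hΛint : IsLeftIntegral k Λ) (hlamcoint : IsRightCointegral k lam)
    (hnorm : lam Λ = 1) :
    ∃ Φ : H ≃ₗ[k] Module.Dual k H,
      ∀ h x : H, Φ h x = lam (HopfAlgebra.antipode (R := k) h * x) :=
  frobeniusMap_bijective_general k H Λ lam hΛint hlamcoint hnorm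
end
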